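/- Let X be a separable complex Banach space and let T_1, …, T_N be hypercyclic continuous linear operators on X such that for every nonempty open set U ⊆ X and all nonempty open sets V_1, …, V_N ⊆ X the intersection N_{T_1}(U, V_1) ∩ … ∩ N_{T_N}(U, V_N) is nonempty. Then the direct sum T_1 ⊕ … ⊕ T_N is hypercyclic on X^N. -/
import Mathlib

open Set Metric Topology Filter

/-- The set of hitting times `N_T(U, V) = {n : T^n(U) ∩ V ≠ ∅}`. -/
def hittingTimes {X : Type*} [NormedAddCommGroup X] [NormedSpace ℂ X]
    (T : X →L[ℂ] X) (U V : Set X) : Set ℕ :=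
  {n : ℕ | ((T ^ n) '' U ∩ V).Nonempty}

section Aux

variable {X : Type*} [NormedAddCommGroup X] [NormedSpace ℂ X]

/-- Tail of a dense orbit is dense: one can hit an open set with large times. -/
lemma tail_hit [Nontrivial X] {S : X →L[ℂ] X} {x : X}
    (hx : Dense (Set.range fun n : ℕ => (S ^ n) x)) {B : Set X} (hB : IsOpen B)
    (hBne : B.Nonempty) (k : ℕ) : ∃ m, k ≤ m ∧ (S ^ m) x ∈ B := by
  haveI : ∀ z : X, Filter.NeBot (𝓝[≠] z) := fun z => Module.punctured_nhds_neBot ℂ X z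
  set f : ℕ → X := fun n => (S ^ n) x with hf
  have hfin : ((f '' Set.Iio k)).Finite := (Set.finite_Iio k).image f
  have hD : Dense (Set.range f \ f '' Set.Iio k) := hx.diff_finite hfin
  obtain ⟨z, hzB, hz⟩ := hD.inter_open_nonempty B hB hBne
  obtain ⟨⟨m, rfl⟩, hznot⟩ := hz
  refine ⟨m, ?_, hzB⟩
  by_contra hlt
  exact hznot ⟨m, Set.mem_Iio.2 (by omega), rfl⟩

/-- A hypercyclic operator is topologically transitive. -/
lemma hc_transitive [Nontrivial X] {S : X →L[ℂ] X} {x : X}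
    (hx : Dense (Set.range fun n : ℕ => (S ^ n) x)) {A B : Set X}
    (hA : IsOpen A) (hAne : A.Nonempty) (hB : IsOpen B) (hBne : B.Nonempty) :
    ∃ n, ∃ a ∈ A, (S ^ n) a ∈ B := by
  obtain ⟨z, hzA, k, rfl⟩ := hx.inter_open_nonempty A hA hAne
  obtain ⟨m, hkm, hmB⟩ := tail_hit hx hB hBne k
  refine ⟨m - k, (S ^ k) x, hzA, ?_⟩
  have : (S ^ (m - k)) ((S ^ k) x) = (S ^ m) x := by
    rw [← ContinuousLinearMap.mul_apply, ← pow_add, Nat.sub_add_cancel hkm]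
  rw [this]; exact hmB

/-- Powers of a hypercyclic operator have dense range. -/
lemma hc_pow_dense_range [Nontrivial X] {S : X →L[ℂ] X} {x : X}
    (hx : Dense (Set.range fun n : ℕ => (S ^ n) x)) (s : ℕ) {B : Set X}
    (hB : IsOpen B) (hBne : B.Nonempty) : ∃ z, (S ^ s) z ∈ B := by
  obtain ⟨m, hsm, hmB⟩ := tail_hit hx hB hBne s
  refine ⟨(S ^ (m - s)) x, ?_⟩
  have : (S ^ s) ((S ^ (m - s)) x) = (S ^ m) x := by
    rw [← ContinuousLinearMap.mul_apply, ← pow_add, Nat.add_sub_cancel' hsm]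
  rw [this]; exact hmB

/-- Main combinatorial claim: the common-source condition together with hypercyclicity of
each operator yields full (separate sources) simultaneous transitivity. -/
lemma claim [Nontrivial X] {N : ℕ} (T : Fin N → (X →L[ℂ] X))
    (hhc : ∀ i : Fin N, ∃ x : X, Dense (Set.range fun n : ℕ => ((T i) ^ n) x))
    (h : ∀ U : Set X, IsOpen U → U.Nonempty →
      ∀ V : Fin N → Set X, (∀ i, IsOpen (V i)) → (∀ i, (V i).Nonempty) →
        (⋂ i : Fin N, hittingTimes (T i) U (V i)).Nonempty)
    (U V : Fin N → Set X) (hUo : ∀ i, IsOpen (U i)) (hUne : ∀ i, (U i).Nonempty)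
    (hVo : ∀ i, IsOpen (V i)) (hVne : ∀ i, (V i).Nonempty) :
    ∃ n, ∀ i, ∃ u ∈ U i, ((T i) ^ n) u ∈ V i := by
  choose xs hxs using hhc
  have P : ∀ k : ℕ, ∀ U₀ : Set X, IsOpen U₀ → U₀.Nonempty →
      ∀ W : Fin N → Set X, (∀ i, IsOpen (W i)) → (∀ i, (W i).Nonempty) →
      ∃ n, ∀ i : Fin N, ∃ u, u ∈ (if (i : ℕ) < k then U i else U₀) ∧ ((T i) ^ n) u ∈ W i := by
    intro k
    induction k with
    | zero =>
      intro U₀ hU₀o hU₀ne W hWo hWne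
      obtain ⟨n, hn⟩ := h U₀ hU₀o hU₀ne W hWo hWne
      refine ⟨n, fun i => ?_⟩
      obtain ⟨z, ⟨u, hu, rfl⟩, hz⟩ := Set.mem_iInter.1 hn i
      exact ⟨u, by rw [if_neg (Nat.not_lt_zero _)]; exact hu, hz⟩
    | succ k ih =>
      intro U₀ hU₀o hU₀ne W hWo hWne
      by_cases hk : k < N
      · obtain ⟨s, a, haU₀, haUj⟩ :=
          hc_transitive (hxs ⟨k, hk⟩) hU₀o hU₀ne (hUo ⟨k, hk⟩) (hUne ⟨k, hk⟩)
        have hW₀o : IsOpen (U₀ ∩ ((T ⟨k, hk⟩) ^ s) ⁻¹' (U ⟨k, hk⟩)) :=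
          hU₀o.inter (((T ⟨k, hk⟩) ^ s).continuous.isOpen_preimage _ (hUo ⟨k, hk⟩))
        have hW₀ne : (U₀ ∩ ((T ⟨k, hk⟩) ^ s) ⁻¹' (U ⟨k, hk⟩)).Nonempty := ⟨a, haU₀, haUj⟩
        have hW'o : ∀ i : Fin N, IsOpen (if (i : ℕ) = k then ((T i) ^ s) ⁻¹' (W i) else W i) := by
          intro i
          by_cases hik : (i : ℕ) = k
          · rw [if_pos hik]
            exact ((T i) ^ s).continuous.isOpen_preimage _ (hWo i)
          · rw [if_neg hik]; exact hWo i
        have hW'ne : ∀ i : Fin N, (if (i : ℕ) = k then ((T i) ^ s) ⁻¹' (W i) else W i).Nonempty := by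
          intro i
          by_cases hik : (i : ℕ) = k
          · rw [if_pos hik]
            exact hc_pow_dense_range (hxs i) s (hWo i) (hWne i)
          · rw [if_neg hik]; exact hWne i
        obtain ⟨n, hn⟩ := ih (U₀ ∩ ((T ⟨k, hk⟩) ^ s) ⁻¹' (U ⟨k, hk⟩)) hW₀o hW₀ne
          (fun i => if (i : ℕ) = k then ((T i) ^ s) ⁻¹' (W i) else W i) hW'o hW'ne
        refine ⟨n, fun i => ?_⟩
        obtain ⟨u, hu, huW⟩ := hn i
        rcases lt_trichotomy (i : ℕ) k with hik | hik | hik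
        · rw [if_pos hik] at hu
          rw [if_neg (by omega)] at huW
          exact ⟨u, by rw [if_pos (by omega)]; exact hu, huW⟩
        · have hi : i = ⟨k, hk⟩ := Fin.ext hik
          rw [if_neg (by omega)] at hu
          rw [if_pos hik] at huW
          refine ⟨((T i) ^ s) u, ?_, ?_⟩
          · rw [if_pos (by omega)]
            have := hu.2
            rw [← hi] at this
            exact this
          · have hcomm : ((T i) ^ n) (((T i) ^ s) u) = ((T i) ^ s) (((T i) ^ n) u) := by
              rw [← ContinuousLinearMap.mul_apply, ← pow_add, add_comm,
                pow_add, ContinuousLinearMap.mul_apply]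
            rw [hcomm]
            exact huW
        · rw [if_neg (by omega)] at hu
          rw [if_neg (by omega)] at huW
          exact ⟨u, by rw [if_neg (by omega)]; exact hu.1, huW⟩
      · obtain ⟨n, hn⟩ := ih U₀ hU₀o hU₀ne W hWo hWne
        refine ⟨n, fun i => ?_⟩
        obtain ⟨u, hu, huW⟩ := hn i
        have hi : (i : ℕ) < k := lt_of_lt_of_le i.isLt (le_of_not_gt hk)
        rw [if_pos hi] at hu
        exact ⟨u, by rw [if_pos (by omega)]; exact hu, huW⟩
  obtain ⟨n, hn⟩ := P N Set.univ isOpen_univ ⟨0, trivial⟩ V hVo hVne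
  refine ⟨n, fun i => ?_⟩
  obtain ⟨u, hu, huW⟩ := hn i
  rw [if_pos i.isLt] at hu
  exact ⟨u, hu, huW⟩

end Aux

theorem stmt6 {X : Type*} [NormedAddCommGroup X] [NormedSpace ℂ X] [CompleteSpace X]
    [TopologicalSpace.SeparableSpace X] {N : ℕ}
    (T : Fin N → (X →L[ℂ] X))
    (hhc : ∀ i : Fin N, ∃ x : X, Dense (Set.range fun n : ℕ => ((T i) ^ n) x))
    (h : ∀ U : Set X, IsOpen U → U.Nonempty →
      ∀ V : Fin N → Set X, (∀ i, IsOpen (V i)) → (∀ i, (V i).Nonempty) →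
        (⋂ i : Fin N, hittingTimes (T i) U (V i)).Nonempty) :
    ∃ x : Fin N → X, Dense (Set.range fun n : ℕ => fun i : Fin N => ((T i) ^ n) (x i)) := by
  rcases subsingleton_or_nontrivial X with hX | hX
  · refine ⟨fun _ => 0, fun y => subset_closure ⟨0, ?_⟩⟩
    exact Subsingleton.elim _ _
  · haveI : SecondCountableTopology X := UniformSpace.secondCountable_of_separable X
    obtain ⟨b, hbc, hbne, hbasis⟩ := TopologicalSpace.exists_countable_basis (Fin N → X)
    haveI := hbc.to_subtype
    set Φ : ℕ → (Fin N → X) → (Fin N → X) := fun n y i => ((T i) ^ n) (y i) with hΦ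
    have hΦc : ∀ n, Continuous (Φ n) := fun n =>
      continuous_pi fun i => ((T i) ^ n).continuous.comp (continuous_apply i)
    set G : b → Set (Fin N → X) := fun B => ⋃ n, Φ n ⁻¹' (B : Set (Fin N → X)) with hG
    have hGo : ∀ B, IsOpen (G B) := fun B =>
      isOpen_iUnion fun n => (hbasis.isOpen B.2).preimage (hΦc n)
    have hGd : ∀ B, Dense (G B) := by
      intro B
      rw [dense_iff_inter_open]
      intro U hUo hUne
      obtain ⟨y, hy⟩ := hUne
      obtain ⟨ε, hε, hball⟩ := Metric.isOpen_iff.1 hUo y hy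
      have hBne : (B : Set (Fin N → X)).Nonempty := by
        rcases Set.eq_empty_or_nonempty (B : Set (Fin N → X)) with he | hne
        · exact absurd (he ▸ B.2) hbne
        · exact hne
      obtain ⟨z, hz⟩ := hBne
      obtain ⟨δ, hδ, hball'⟩ := Metric.isOpen_iff.1 (hbasis.isOpen B.2) z hz
      obtain ⟨n, hn⟩ := claim T hhc h (fun i => Metric.ball (y i) ε) (fun i => Metric.ball (z i) δ)
        (fun i => Metric.isOpen_ball) (fun i => ⟨y i, Metric.mem_ball_self hε⟩)
        (fun i => Metric.isOpen_ball) (fun i => ⟨z i, Metric.mem_ball_self hδ⟩)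
      choose u hu hTu using hn
      refine ⟨u, ?_, Set.mem_iUnion.2 ⟨n, ?_⟩⟩
      · apply hball
        rw [ball_pi _ hε]
        exact fun i _ => hu i
      · apply hball'
        rw [ball_pi _ hδ]
        exact fun i _ => hTu i
    have hdense : Dense (⋂ B, G B) := dense_iInter_of_isOpen hGo hGd
    obtain ⟨x, hx⟩ := hdense.nonempty
    refine ⟨x, hbasis.dense_iff.2 fun o ho hone => ?_⟩
    have hxo : x ∈ G ⟨o, ho⟩ := Set.mem_iInter.1 hx ⟨o, ho⟩
    obtain ⟨n, hn⟩ := Set.mem_iUnion.1 hxo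
    exact ⟨Φ n x, hn, n, rfl⟩
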